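/- arXiv:2005.09407 — 4 statements merged into one kernel-verified Lean document; each statement's English description precedes it below -/
import Mathlib

section
/- There exists a constant c_n > 0 depending only on the dimension n such that if B ⊆ ℝⁿ is a unit Euclidean ball and u : B → ℝ is smooth with Δu(x) ≥ 1 for all x ∈ B, then ‖u‖_{L^∞(B)} · |{x ∈ B : |u(x)| ≥ c_n}| ≥ c_n. -/
set_option maxHeartbeats 1000000
set_option linter.unreachableTactic false
set_option linter.unusedTactic false


open MeasureTheory Metric Set ENNReal

/-- The Laplacian `Δu = Σᵢ ∂²u/∂xᵢ²` of a function `u : ℝⁿ → ℝ`. -/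
noncomputable def laplacian {n : ℕ} (u : EuclideanSpace ℝ (Fin n) → ℝ)
    (x : EuclideanSpace ℝ (Fin n)) : ℝ :=
  ∑ i : Fin n,
    fderiv ℝ (fun y => fderiv ℝ u y (EuclideanSpace.single i 1)) x (EuclideanSpace.single i 1)

namespace Stein

variable {N : ℕ}

lemma abs_coord_le (v : EuclideanSpace ℝ (Fin N)) (i : Fin N) : |v i| ≤ ‖v‖ := by
  rw [EuclideanSpace.norm_eq v]
  have h1 : |v i| = Real.sqrt (‖v i‖ ^ 2) := by rw [Real.sqrt_sq_eq_abs]; simp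
  rw [h1]
  exact Real.sqrt_le_sqrt <| Finset.single_le_sum (f := fun j => ‖v j‖ ^ 2)
    (fun j _ => by positivity) (Finset.mem_univ i)

lemma lap_eq (u : EuclideanSpace ℝ (Fin N) → ℝ) (x : EuclideanSpace ℝ (Fin N)) :
    laplacian u x
      = ∑ i, fderiv ℝ (fun y => fderiv ℝ u y (EuclideanSpace.single i 1)) x
          (EuclideanSpace.single i 1) := rfl

lemma continuousOn_lap {u : EuclideanSpace ℝ (Fin N) → ℝ} {s : Set (EuclideanSpace ℝ (Fin N))}
    (hs : IsOpen s) (hu : ContDiffOn ℝ 2 u s) : ContinuousOn (laplacian u) s := by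
  apply continuousOn_finset_sum
  intro i _
  have h1 : ContDiffOn ℝ 1 (fun y => fderiv ℝ u y (EuclideanSpace.single i 1)) s :=
    (hu.fderiv_of_isOpen hs (by norm_num)).clm_apply contDiffOn_const
  have h2 : ContDiffOn ℝ 0 (fderiv ℝ (fun y => fderiv ℝ u y (EuclideanSpace.single i 1))) s :=
    h1.fderiv_of_isOpen hs (by norm_num)
  exact (h2.clm_apply contDiffOn_const).continuousOn

lemma fderiv_eq_zero_of_eqOn_zero {w : EuclideanSpace ℝ (Fin N) → ℝ}
    {O : Set (EuclideanSpace ℝ (Fin N))} (hO : IsOpen O)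
    (h0 : ∀ x ∈ O, w x = 0) {x : EuclideanSpace ℝ (Fin N)} (hx : x ∈ O) : fderiv ℝ w x = 0 := by
  have h : w =ᶠ[nhds x] (fun _ => (0 : ℝ)) := Filter.eventually_of_mem (hO.mem_nhds hx) h0
  rw [h.fderiv_eq]
  exact fderiv_const_apply 0

lemma lap_eq_zero_of_eqOn_zero {w : EuclideanSpace ℝ (Fin N) → ℝ}
    {O : Set (EuclideanSpace ℝ (Fin N))} (hO : IsOpen O)
    (h0 : ∀ x ∈ O, w x = 0) {x : EuclideanSpace ℝ (Fin N)} (hx : x ∈ O) : laplacian w x = 0 := by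
  rw [lap_eq]
  apply Finset.sum_eq_zero
  intro i _
  have h1 : ∀ y ∈ O, fderiv ℝ w y (EuclideanSpace.single i 1) = 0 := fun y hy => by
    rw [fderiv_eq_zero_of_eqOn_zero hO h0 hy]; rfl
  rw [fderiv_eq_zero_of_eqOn_zero hO h1 hx]; rfl

lemma green {k : ℕ} (x₀ : EuclideanSpace ℝ (Fin (k+1))) (u φ : EuclideanSpace ℝ (Fin (k+1)) → ℝ)
    (hu : ContDiffOn ℝ 2 u (ball x₀ 1)) (hφ : ContDiff ℝ 2 φ)
    (hφ0 : ∀ x ∉ closedBall x₀ (3/4 : ℝ), φ x = 0) :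
    ∫ x in ball x₀ 1, (φ x * laplacian u x - u x * laplacian φ x) = 0 := by
  classical
  have hsub : closedBall x₀ (3/4 : ℝ) ⊆ ball x₀ 1 := closedBall_subset_ball (by norm_num)
  set O : Set (EuclideanSpace ℝ (Fin (k+1))) := (closedBall x₀ (3/4 : ℝ))ᶜ with hOdef
  have hO : IsOpen O := isOpen_compl_iff.2 Metric.isClosed_closedBall
  have hφO : ∀ x ∈ O, φ x = 0 := fun x hx => hφ0 x hx
  set g : Fin (k+1) → EuclideanSpace ℝ (Fin (k+1)) → ℝ :=
    fun i => fun y => fderiv ℝ u y (EuclideanSpace.single i 1) with hgdef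
  set h : Fin (k+1) → EuclideanSpace ℝ (Fin (k+1)) → ℝ :=
    fun i => fun y => fderiv ℝ φ y (EuclideanSpace.single i 1) with hhdef
  set f : Fin (k+1) → EuclideanSpace ℝ (Fin (k+1)) → ℝ :=
    fun i x => φ x * g i x - u x * h i x with hfdef
  -- smoothness facts
  have hgC : ∀ i, ContDiffOn ℝ 1 (g i) (ball x₀ 1) := fun i =>
    (hu.fderiv_of_isOpen isOpen_ball (by norm_num)).clm_apply contDiffOn_const
  have hhC : ∀ i, ContDiff ℝ 1 (h i) := fun i =>
    (hφ.fderiv_right (by norm_num)).clm_apply contDiff_const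
  have huD : ∀ x ∈ ball x₀ 1, DifferentiableAt ℝ u x := fun x hx =>
    (hu.differentiableOn (by norm_num)).differentiableAt (isOpen_ball.mem_nhds hx)
  have hgD : ∀ i, ∀ x ∈ ball x₀ 1, DifferentiableAt ℝ (g i) x := fun i x hx =>
    ((hgC i).differentiableOn one_ne_zero).differentiableAt (isOpen_ball.mem_nhds hx)
  have hφD : Differentiable ℝ φ := hφ.differentiable (by norm_num)
  have hhD : ∀ i, Differentiable ℝ (h i) := fun i => (hhC i).differentiable one_ne_zero
  have hfD : ∀ i, ∀ x ∈ ball x₀ 1, DifferentiableAt ℝ (f i) x := fun i x hx =>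
    ((hφD x).mul (hgD i x hx)).sub ((huD x hx).mul ((hhD i) x))
  -- vanishing facts on O
  have hhO : ∀ i, ∀ x ∈ O, h i x = 0 := fun i x hx => by
    show fderiv ℝ φ x (EuclideanSpace.single i 1) = 0
    rw [fderiv_eq_zero_of_eqOn_zero hO hφO hx]; rfl
  have hfO : ∀ i, ∀ x ∈ O, f i x = 0 := fun i x hx => by
    show φ x * g i x - u x * h i x = 0
    rw [hφO x hx, hhO i x hx]; ring
  have hcover : ∀ x : EuclideanSpace ℝ (Fin (k+1)), x ∈ ball x₀ 1 ∨ x ∈ O := by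
    intro x
    by_cases hx : x ∈ closedBall x₀ (3/4 : ℝ)
    · exact Or.inl (hsub hx)
    · exact Or.inr hx
  have hfC : ∀ i, Continuous (f i) := by
    intro i
    rw [continuous_iff_continuousAt]
    intro x
    rcases hcover x with hx | hx
    · exact (hfD i x hx).continuousAt
    · have he : f i =ᶠ[nhds x] fun _ => (0:ℝ) :=
        Filter.eventually_of_mem (hO.mem_nhds hx) (hfO i)
      exact continuousAt_const.congr he.symm
  -- the derivative field
  set f' : Fin (k+1) → EuclideanSpace ℝ (Fin (k+1)) →
      (EuclideanSpace ℝ (Fin (k+1)) →L[ℝ] ℝ) :=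
    fun i x => if x ∈ ball x₀ 1 then fderiv ℝ (f i) x else 0 with hf'def
  have hfderiv : ∀ i x, HasFDerivAt (f i) (f' i x) x := by
    intro i x
    by_cases hx : x ∈ ball x₀ 1
    · simp only [hf'def, if_pos hx]
      exact (hfD i x hx).hasFDerivAt
    · simp only [hf'def, if_neg hx]
      have hxO : x ∈ O := by
        rcases hcover x with h' | h'
        · exact absurd h' hx
        · exact h'
      have he : f i =ᶠ[nhds x] fun _ => (0:ℝ) :=
        Filter.eventually_of_mem (hO.mem_nhds hxO) (hfO i)
      exact (hasFDerivAt_const (0:ℝ) x).congr_of_eventuallyEq he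
  -- pointwise divergence
  set D : EuclideanSpace ℝ (Fin (k+1)) → ℝ := fun x =>
    if x ∈ closedBall x₀ (3/4 : ℝ) then φ x * laplacian u x - u x * laplacian φ x else 0
    with hDdef
  have hdiv : ∀ x, (∑ i, f' i x (EuclideanSpace.single i 1)) = D x := by
    intro x
    by_cases hx : x ∈ ball x₀ 1
    · have key : (∑ i, f' i x (EuclideanSpace.single i 1))
          = φ x * laplacian u x - u x * laplacian φ x := by
        have hfd : ∀ i, f' i x
            = (φ x • fderiv ℝ (g i) x + g i x • fderiv ℝ φ x)
              - (u x • fderiv ℝ (h i) x + h i x • fderiv ℝ u x) := by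
          intro i
          simp only [hf'def, if_pos hx, hfdef]
          rw [fderiv_fun_sub (f := fun y => φ y * g i y) (g := fun y => u y * h i y)
              ((hφD x).mul (hgD i x hx)) ((huD x hx).mul ((hhD i) x)),
            fderiv_fun_mul (hφD x) (hgD i x hx), fderiv_fun_mul (huD x hx) ((hhD i) x)]
        have hterm : ∀ i, f' i x (EuclideanSpace.single i 1)
            = φ x * fderiv ℝ (g i) x (EuclideanSpace.single i 1)
              - u x * fderiv ℝ (h i) x (EuclideanSpace.single i 1) := by
          intro i
          rw [hfd i]
          have e1 : fderiv ℝ φ x (EuclideanSpace.single i 1) = h i x := rfl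
          have e2 : fderiv ℝ u x (EuclideanSpace.single i 1) = g i x := rfl
          simp only [ContinuousLinearMap.sub_apply, ContinuousLinearMap.add_apply,
            ContinuousLinearMap.smul_apply, smul_eq_mul, e1, e2]
          ring
        rw [Finset.sum_congr rfl fun i _ => hterm i, Finset.sum_sub_distrib,
          ← Finset.mul_sum, ← Finset.mul_sum, lap_eq u x, lap_eq φ x]
      rw [key]
      simp only [hDdef]
      by_cases hx' : x ∈ closedBall x₀ (3/4 : ℝ)
      · rw [if_pos hx']
      · rw [if_neg hx', hφO x hx', lap_eq_zero_of_eqOn_zero hO hφO (show x ∈ O from hx')]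
        ring
    · have hxO : x ∈ O := (hcover x).resolve_left hx
      have hx' : x ∉ closedBall x₀ (3/4 : ℝ) := hxO
      simp only [hf'def, if_neg hx, hDdef, if_neg hx']
      simp
  -- integrability of D
  set expr : EuclideanSpace ℝ (Fin (k+1)) → ℝ :=
    fun x => φ x * laplacian u x - u x * laplacian φ x with hexprdef
  have hlapφ : Continuous (laplacian φ) := by
    rw [← continuousOn_univ]
    exact continuousOn_lap isOpen_univ hφ.contDiffOn
  have hexprC : ContinuousOn expr (ball x₀ 1) :=
    ((hφ.continuous.continuousOn).mul (continuousOn_lap isOpen_ball hu)).sub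
      ((hu.continuousOn).mul hlapφ.continuousOn)
  have hDeq : D = Set.indicator (closedBall x₀ (3/4 : ℝ)) expr := by
    funext x
    rw [hDdef, Set.indicator_apply]
  have hIcb : IntegrableOn expr (closedBall x₀ (3/4 : ℝ)) :=
    (hexprC.mono hsub).integrableOn_compact (isCompact_closedBall _ _)
  have hD_int : Integrable D := by
    rw [hDeq]
    exact (integrable_indicator_iff measurableSet_closedBall).2 hIcb
  -- transfer to the Pi space and apply the divergence theorem
  set L := PiLp.continuousLinearEquiv 2 ℝ (fun _ : Fin (k+1) => ℝ) with hLdef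
  set me := (MeasurableEquiv.toLp 2 (Fin (k+1) → ℝ)).symm with hmedef
  have hmp : MeasurePreserving me := EuclideanSpace.volume_preserving_symm_measurableEquiv_toLp _
  set a : Fin (k+1) → ℝ := fun i => x₀ i - 2 with hadef
  set b : Fin (k+1) → ℝ := fun i => x₀ i + 2 with hbdef
  have hab : a ≤ b := by
    intro i
    simp only [hadef, hbdef]
    linarith
  set F : Fin (k+1) → (Fin (k+1) → ℝ) → ℝ := fun i y => f i (L.symm y) with hFdef
  set F' : Fin (k+1) → (Fin (k+1) → ℝ) → ((Fin (k+1) → ℝ) →L[ℝ] ℝ) :=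
    fun i y => (f' i (L.symm y)).comp
      (L.symm : (Fin (k+1) → ℝ) →L[ℝ] EuclideanSpace ℝ (Fin (k+1))) with hF'def
  have HcF : ∀ i, ContinuousOn (F i) (Icc a b) := fun i =>
    ((hfC i).comp L.symm.continuous).continuousOn
  have HdF : ∀ y ∈ (Set.pi univ fun i => Ioo (a i) (b i)) \ (∅ : Set (Fin (k+1) → ℝ)),
      ∀ i, HasFDerivAt (F i) (F' i y) y := by
    intro y _ i
    exact (hfderiv i (L.symm y)).comp y L.symm.hasFDerivAt
  have hfun : (fun y : Fin (k+1) → ℝ => ∑ i, F' i y (Pi.single i 1))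
      = fun y => D (me.symm y) := by
    funext y
    have h1 : ∀ i, F' i y (Pi.single i 1)
        = f' i (L.symm y) (EuclideanSpace.single i 1) := fun i => rfl
    rw [Finset.sum_congr rfl fun i _ => h1 i]
    exact hdiv (L.symm y)
  have HiF : IntegrableOn (fun y => ∑ i, F' i y (Pi.single i 1)) (Icc a b) := by
    rw [hfun]
    have h2 : Integrable (fun y => D (me.symm y)) := by
      have h3 := ((hmp.symm me).integrable_comp_emb me.symm.measurableEmbedding).2 hD_int
      rwa [Function.comp_def] at h3
    exact h2.integrableOn
  have hthm := integral_divergence_of_hasFDerivAt_off_countable' a b hab F F'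
    ∅ countable_empty HcF HdF HiF
  -- the boundary terms vanish
  have hz : ∀ (i : Fin (k+1)) (t : ℝ), |t - x₀ i| = 2 →
      ∀ x : Fin k → ℝ, F i (i.insertNth t x) = 0 := by
    intro i t ht x
    apply hfO
    show L.symm (i.insertNth t x) ∈ O
    simp only [hOdef, Set.mem_compl_iff]
    intro hcb
    have h3 : |((L.symm (i.insertNth t x) : EuclideanSpace ℝ (Fin (k+1))) - x₀) i|
        ≤ ‖(L.symm (i.insertNth t x) : EuclideanSpace ℝ (Fin (k+1))) - x₀‖ :=
      abs_coord_le _ i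
    have h4 : ‖(L.symm (i.insertNth t x) : EuclideanSpace ℝ (Fin (k+1))) - x₀‖ ≤ 3/4 := by
      rw [← dist_eq_norm]
      exact mem_closedBall.1 hcb
    have h5 : ((L.symm (i.insertNth t x) : EuclideanSpace ℝ (Fin (k+1))) - x₀) i
        = t - x₀ i := by
      have e0 : ∀ (v w : EuclideanSpace ℝ (Fin (k+1))) (j : Fin (k+1)),
          (v - w) j = v j - w j := fun _ _ _ => rfl
      set p : Fin (k+1) → ℝ := i.insertNth t x with hpdef
      have e1 : (L.symm p : EuclideanSpace ℝ (Fin (k+1))) i = p i := rfl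
      rw [e0, e1, hpdef, Fin.insertNth_apply_same]
    rw [h5, ht] at h3
    linarith [h3.trans h4]
  have hfaces : ∀ i : Fin (k+1),
      ((∫ x in Icc (a ∘ i.succAbove) (b ∘ i.succAbove), F i (i.insertNth (b i) x)) -
       ∫ x in Icc (a ∘ i.succAbove) (b ∘ i.succAbove), F i (i.insertNth (a i) x)) = 0 := by
    intro i
    have e1 : (fun x : Fin k → ℝ => F i (i.insertNth (b i) x)) = fun _ => (0:ℝ) :=
      funext fun x => hz i (b i) (by simp [hbdef]) x
    have e2 : (fun x : Fin k → ℝ => F i (i.insertNth (a i) x)) = fun _ => (0:ℝ) :=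
      funext fun x => hz i (a i) (by simp [hadef]) x
    rw [e1, e2, integral_zero, sub_self]
  rw [Finset.sum_congr rfl fun i _ => hfaces i, Finset.sum_const, smul_zero] at hthm
  rw [hfun] at hthm
  -- move the integral back to Euclidean space
  have hpre : ∫ y in Icc a b, D (me.symm y) = ∫ x in me ⁻¹' (Icc a b), D x := by
    calc ∫ y in Icc a b, D (me.symm y)
        = ∫ x in me ⁻¹' (Icc a b), D (me.symm (me x)) :=
          (hmp.setIntegral_preimage_emb me.measurableEmbedding
            (fun z => D (me.symm z)) (Icc a b)).symm
      _ = ∫ x in me ⁻¹' (Icc a b), D x := by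
          simp only [MeasurableEquiv.symm_apply_apply]
  have hcbsub : closedBall x₀ (3/4 : ℝ) ⊆ me ⁻¹' (Icc a b) := by
    intro x hx
    have hd : ‖x - x₀‖ ≤ 3/4 := by rw [← dist_eq_norm]; exact mem_closedBall.1 hx
    simp only [mem_preimage, Set.mem_Icc]
    constructor <;> intro i <;>
    · have h6 : |x i - x₀ i| ≤ 3/4 := le_trans (abs_coord_le (x - x₀) i) hd
      have h7 := abs_le.1 h6
      show _ ≤ _
      simp only [hadef, hbdef]
      have h8 : (me x) i = x i := rfl
      rw [h8]
      first
        | linarith [h7.1]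
        | linarith [h7.2]
  have hIccD : ∫ x in me ⁻¹' (Icc a b), D x
      = ∫ x in closedBall x₀ (3/4 : ℝ), expr x := by
    rw [hDeq, setIntegral_indicator measurableSet_closedBall,
      Set.inter_eq_self_of_subset_right hcbsub]
  have hballD : ∫ x in ball x₀ 1, expr x = ∫ x in closedBall x₀ (3/4 : ℝ), expr x := by
    have h1 : ∀ x ∈ ball x₀ 1, expr x = D x := by
      intro x hx
      simp only [hDdef]
      by_cases hx' : x ∈ closedBall x₀ (3/4 : ℝ)
      · rw [if_pos hx']
      · rw [if_neg hx']
        simp only [hexprdef]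
        rw [hφO x hx', lap_eq_zero_of_eqOn_zero hO hφO hx']
        ring
    rw [setIntegral_congr_fun measurableSet_ball h1, hDeq,
      setIntegral_indicator measurableSet_closedBall,
      Set.inter_eq_self_of_subset_right hsub]
  show (∫ x in ball x₀ 1, expr x) = 0
  rw [hballD, ← hIccD, ← hpre, hthm]


lemma fderiv_translate (w : EuclideanSpace ℝ (Fin N) → ℝ) (a x : EuclideanSpace ℝ (Fin N)) :
    fderiv ℝ (fun y => w (y - a)) x = fderiv ℝ w (x - a) := by
  by_cases hw : DifferentiableAt ℝ w (x - a)
  · have h1 : HasFDerivAt (fun y : EuclideanSpace ℝ (Fin N) => y - a)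
        (ContinuousLinearMap.id ℝ (EuclideanSpace ℝ (Fin N))) x :=
      (hasFDerivAt_id x).sub_const a
    have h2 := hw.hasFDerivAt.comp x h1
    rw [ContinuousLinearMap.comp_id] at h2
    exact h2.fderiv
  · have h3 : ¬ DifferentiableAt ℝ (fun y => w (y - a)) x := by
      intro hd
      apply hw
      have h4 : DifferentiableAt ℝ (fun z : EuclideanSpace ℝ (Fin N) => z + a) (x - a) :=
        (differentiable_id.add_const a).differentiableAt
      have h5 : DifferentiableAt ℝ ((fun y => w (y - a)) ∘ (fun z => z + a)) (x - a) :=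
        DifferentiableAt.comp (x - a) (by rwa [sub_add_cancel]) h4
      have h7 : (fun z : EuclideanSpace ℝ (Fin N) => w (z + a - a)) = w := by
        funext z
        rw [add_sub_cancel_right]
      rw [show ((fun y => w (y - a)) ∘ (fun z => z + a))
          = fun z : EuclideanSpace ℝ (Fin N) => w (z + a - a) from rfl, h7] at h5
      exact h5
    rw [fderiv_zero_of_not_differentiableAt hw, fderiv_zero_of_not_differentiableAt h3]

lemma lap_translate (w : EuclideanSpace ℝ (Fin N) → ℝ) (a x : EuclideanSpace ℝ (Fin N)) :
    laplacian (fun y => w (y - a)) x = laplacian w (x - a) := by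
  rw [lap_eq, lap_eq]
  refine Finset.sum_congr rfl fun i _ => ?_
  have h1 : (fun y => fderiv ℝ (fun y' => w (y' - a)) y (EuclideanSpace.single i 1))
      = fun y => (fun z => fderiv ℝ w z (EuclideanSpace.single i 1)) (y - a) := by
    funext y
    rw [fderiv_translate]
  rw [h1, fderiv_translate (fun z => fderiv ℝ w z (EuclideanSpace.single i 1)) a x]

lemma integrableOn_ball_of_supp {x₀ : EuclideanSpace ℝ (Fin N)} {w : EuclideanSpace ℝ (Fin N) → ℝ}
    (hw : ContinuousOn w (ball x₀ 1))
    (h0 : ∀ x ∉ closedBall x₀ (3/4 : ℝ), w x = 0) : IntegrableOn w (ball x₀ 1) := by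
  have hsub : closedBall x₀ (3/4 : ℝ) ⊆ ball x₀ 1 := closedBall_subset_ball (by norm_num)
  have h1 : IntegrableOn w (closedBall x₀ (3/4 : ℝ)) :=
    (hw.mono hsub).integrableOn_compact (isCompact_closedBall _ _)
  have h2 : IntegrableOn w (ball x₀ 1 \ closedBall x₀ (3/4 : ℝ)) := by
    refine (integrableOn_zero).congr_fun (fun x hx => ?_)
      (measurableSet_ball.diff measurableSet_closedBall)
    exact (h0 x hx.2).symm
  have h3 := h1.union h2
  exact h3.mono_set (fun x hx => by
    by_cases hx' : x ∈ closedBall x₀ (3/4 : ℝ)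
    · exact Or.inl hx'
    · exact Or.inr ⟨hx, hx'⟩)

lemma setIntegral_ball_eq {x₀ : EuclideanSpace ℝ (Fin N)} {w : EuclideanSpace ℝ (Fin N) → ℝ}
    (h0 : ∀ x ∉ closedBall x₀ (3/4 : ℝ), w x = 0) :
    ∫ x in ball x₀ 1, w x = ∫ x in closedBall x₀ (3/4 : ℝ), w x := by
  classical
  have hsub : closedBall x₀ (3/4 : ℝ) ⊆ ball x₀ 1 := closedBall_subset_ball (by norm_num)
  have h1 : ∀ x ∈ ball x₀ 1, w x = Set.indicator (closedBall x₀ (3/4 : ℝ)) w x := by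
    intro x hx
    rw [Set.indicator_apply]
    by_cases hx' : x ∈ closedBall x₀ (3/4 : ℝ)
    · rw [if_pos hx']
    · rw [if_neg hx', h0 x hx']
  rw [setIntegral_congr_fun measurableSet_ball h1,
    setIntegral_indicator measurableSet_closedBall,
    Set.inter_eq_self_of_subset_right hsub]

end Stein

/-- Steinerberger's inequality. There is a constant `cₙ > 0`, depending
only on the dimension `n`, such that for every unit Euclidean ball `B ⊆ ℝⁿ` and every
smooth `u` with `Δu ≥ 1` on `B`, one has `‖u‖_{L^∞(B)} · |{x ∈ B : |u(x)| ≥ cₙ}| ≥ cₙ`. -/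
theorem steinerberger_inequality (n : ℕ) :
    ∃ c : ℝ, 0 < c ∧
      ∀ x₀ : EuclideanSpace ℝ (Fin n), ∀ u : EuclideanSpace ℝ (Fin n) → ℝ,
        ContDiffOn ℝ (⊤ : ℕ∞) u (ball x₀ 1) →
        (∀ x ∈ ball x₀ 1, 1 ≤ laplacian u x) →
        ENNReal.ofReal c ≤
          eLpNorm u ∞ (volume.restrict (ball x₀ 1)) *
            volume {x ∈ ball x₀ 1 | c ≤ |u x|} := by
  cases n with
  | zero =>
    refine ⟨1, one_pos, fun x₀ u hu hΔ => ?_⟩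
    have h0 : laplacian u x₀ = 0 := by simp [laplacian]
    have h1 := hΔ x₀ (mem_ball_self one_pos)
    rw [h0] at h1
    norm_num at h1
  | succ k =>
    classical
    set f0 : ContDiffBump (0 : EuclideanSpace ℝ (Fin (k+1))) :=
      ⟨1/2, 3/4, by norm_num, by norm_num⟩ with hf0def
    set w : EuclideanSpace ℝ (Fin (k+1)) → ℝ := fun z => f0 z with hwdef
    have hw2 : ContDiff ℝ 2 w := f0.contDiff
    have hw0 : ∀ z ∉ closedBall (0 : EuclideanSpace ℝ (Fin (k+1))) (3/4 : ℝ), w z = 0 := by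
      intro z hz
      have h1 : z ∉ Function.support (f0 : EuclideanSpace ℝ (Fin (k+1)) → ℝ) := by
        rw [f0.support_eq]
        intro h2
        exact hz (ball_subset_closedBall h2)
      simpa [hwdef] using Function.notMem_support.1 h1
    have hlapw_cont : Continuous (laplacian w) := by
      rw [← continuousOn_univ]
      exact Stein.continuousOn_lap isOpen_univ hw2.contDiffOn
    obtain ⟨K0, hK0⟩ := (isCompact_closedBall (0 : EuclideanSpace ℝ (Fin (k+1)))
      (3/4 : ℝ)).exists_bound_of_continuousOn hlapw_cont.continuousOn
    set K := max K0 1 with hKdef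
    have hK1 : (1:ℝ) ≤ K := le_max_right _ _
    have hKpos : (0:ℝ) < K := lt_of_lt_of_le one_pos hK1
    have hK : ∀ z, |laplacian w z| ≤ K := by
      intro z
      by_cases hz : z ∈ closedBall (0 : EuclideanSpace ℝ (Fin (k+1))) (3/4 : ℝ)
      · exact le_trans (hK0 z hz) (le_max_left _ _)
      · rw [Stein.lap_eq_zero_of_eqOn_zero (isOpen_compl_iff.2 Metric.isClosed_closedBall)
          (fun y hy => hw0 y hy) hz]
        simp [hKpos.le]
    have hA : (0:ℝ) < ∫ z, w z := f0.integral_pos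
    set A := ∫ z, w z with hAdef
    set V := (volume (closedBall (0 : EuclideanSpace ℝ (Fin (k+1))) (3/4 : ℝ))).toReal with hVdef
    have hV0 : (0:ℝ) ≤ V := ENNReal.toReal_nonneg
    set c := A / (2*K*(1+V)) with hcdef
    have hc : 0 < c := by
      apply div_pos hA
      positivity
    refine ⟨c, hc, ?_⟩
    intro x₀ u huω hΔ
    have hu : ContDiffOn ℝ 2 u (ball x₀ 1) := huω.of_le (WithTop.coe_le_coe.2 le_top)
    set φ : EuclideanSpace ℝ (Fin (k+1)) → ℝ := fun x => w (x - x₀) with hφdef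
    have hφ2 : ContDiff ℝ 2 φ := hw2.comp (contDiff_id.sub contDiff_const)
    have hφ0 : ∀ x ∉ closedBall x₀ (3/4 : ℝ), φ x = 0 := by
      intro x hx
      apply hw0
      simp only [mem_closedBall] at hx ⊢
      rwa [dist_zero_right, ← dist_eq_norm]
    have hφnn : ∀ x, 0 ≤ φ x := fun x => f0.nonneg
    have hgreen := Stein.green x₀ u φ hu hφ2 hφ0
    have hlapφ : ∀ x, laplacian φ x = laplacian w (x - x₀) := fun x => Stein.lap_translate w x₀ x
    have hKφ : ∀ x, |laplacian φ x| ≤ K := fun x => by rw [hlapφ]; exact hK _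
    have hlapφ0 : ∀ x ∉ closedBall x₀ (3/4 : ℝ), laplacian φ x = 0 := by
      intro x hx
      rw [hlapφ]
      apply Stein.lap_eq_zero_of_eqOn_zero (isOpen_compl_iff.2 Metric.isClosed_closedBall)
        (fun y hy => hw0 y hy)
      simp only [Set.mem_compl_iff, mem_closedBall] at hx ⊢
      rwa [dist_zero_right, ← dist_eq_norm]
    have hsub : closedBall x₀ (3/4 : ℝ) ⊆ ball x₀ 1 := closedBall_subset_ball (by norm_num)
    have hlapu_cont : ContinuousOn (laplacian u) (ball x₀ 1) :=
      Stein.continuousOn_lap isOpen_ball hu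
    have hφcont : Continuous φ := hφ2.continuous
    have hucont : ContinuousOn u (ball x₀ 1) := hu.continuousOn
    have hlapφ_cont : Continuous (laplacian φ) := by
      rw [← continuousOn_univ]
      exact Stein.continuousOn_lap isOpen_univ hφ2.contDiffOn
    -- integrability
    have I1 : IntegrableOn (fun x => φ x * laplacian u x) (ball x₀ 1) :=
      Stein.integrableOn_ball_of_supp (hφcont.continuousOn.mul hlapu_cont)
        (fun x hx => by rw [hφ0 x hx, zero_mul])
    have I2 : IntegrableOn (fun x => u x * laplacian φ x) (ball x₀ 1) :=
      Stein.integrableOn_ball_of_supp (hucont.mul hlapφ_cont.continuousOn)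
        (fun x hx => by rw [hlapφ0 x hx, mul_zero])
    have Iφ : IntegrableOn φ (ball x₀ 1) :=
      Stein.integrableOn_ball_of_supp hφcont.continuousOn hφ0
    -- Step 1 : A ≤ ∫_ball φ Δu
    have step0 : ∫ x in ball x₀ 1, φ x = A := by
      rw [setIntegral_eq_integral_of_forall_compl_eq_zero
        (fun x hx => hφ0 x (fun hc' => hx (hsub hc')))]
      rw [hAdef, hφdef]
      exact integral_sub_right_eq_self w x₀
    have step1 : A ≤ ∫ x in ball x₀ 1, φ x * laplacian u x := by
      rw [← step0]
      exact setIntegral_mono_on Iφ I1 measurableSet_ball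
        (fun x hx => le_mul_of_one_le_right (hφnn x) (hΔ x hx))
    -- Step 2 : Green
    have step2 : ∫ x in ball x₀ 1, φ x * laplacian u x
        = ∫ x in ball x₀ 1, u x * laplacian φ x := by
      have h1 := integral_sub I1 I2
      rw [hgreen] at h1
      linarith [h1]
    -- Step 3 : restrict to the small closed ball and bound
    have step3 : ∫ x in ball x₀ 1, u x * laplacian φ x
        = ∫ x in closedBall x₀ (3/4 : ℝ), u x * laplacian φ x :=
      Stein.setIntegral_ball_eq (fun x hx => by rw [hlapφ0 x hx, mul_zero])
    have hIu : IntegrableOn (fun x => |u x|) (closedBall x₀ (3/4 : ℝ)) :=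
      ((hucont.mono hsub).abs).integrableOn_compact (isCompact_closedBall _ _)
    have hI2cb : IntegrableOn (fun x => u x * laplacian φ x) (closedBall x₀ (3/4 : ℝ)) :=
      I2.mono_set hsub
    have step4 : ∫ x in closedBall x₀ (3/4 : ℝ), u x * laplacian φ x
        ≤ ∫ x in closedBall x₀ (3/4 : ℝ), |u x| * K := by
      refine setIntegral_mono_on hI2cb (hIu.mul_const K) measurableSet_closedBall ?_
      intro x _
      calc u x * laplacian φ x ≤ |u x * laplacian φ x| := le_abs_self _
        _ = |u x| * |laplacian φ x| := abs_mul _ _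
        _ ≤ |u x| * K := mul_le_mul_of_nonneg_left (hKφ x) (abs_nonneg _)
    have step5 : ∫ x in closedBall x₀ (3/4 : ℝ), |u x| * K
        = (∫ x in closedBall x₀ (3/4 : ℝ), |u x|) * K := by
      exact integral_mul_const K _
    have hIlb : A / K ≤ ∫ x in closedBall x₀ (3/4 : ℝ), |u x| := by
      rw [div_le_iff₀ hKpos]
      calc A ≤ ∫ x in ball x₀ 1, φ x * laplacian u x := step1
        _ = ∫ x in ball x₀ 1, u x * laplacian φ x := step2
        _ = ∫ x in closedBall x₀ (3/4 : ℝ), u x * laplacian φ x := step3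
        _ ≤ ∫ x in closedBall x₀ (3/4 : ℝ), |u x| * K := step4
        _ = (∫ x in closedBall x₀ (3/4 : ℝ), |u x|) * K := step5
    -- Chebyshev
    set T : Set (EuclideanSpace ℝ (Fin (k+1))) := {x ∈ ball x₀ 1 | c ≤ |u x|} with hTdef
    have hTm : MeasurableSet T := by
      have hUopen : IsOpen (ball x₀ 1 ∩ (fun x => |u x|) ⁻¹' (Iio c)) :=
        (hucont.abs).isOpen_inter_preimage isOpen_ball isOpen_Iio
      have hTeq : T = ball x₀ 1 \ (ball x₀ 1 ∩ (fun x => |u x|) ⁻¹' (Iio c)) := by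
        ext x
        simp only [hTdef, Set.mem_sep_iff, Set.mem_diff, Set.mem_inter_iff, Set.mem_preimage,
          Set.mem_Iio, not_and, not_lt]
        constructor
        · rintro ⟨hx, hcx⟩
          exact ⟨hx, fun _ => hcx⟩
        · rintro ⟨hx, hcx⟩
          exact ⟨hx, hcx hx⟩
      rw [hTeq]
      exact measurableSet_ball.diff hUopen.measurableSet
    set S : Set (EuclideanSpace ℝ (Fin (k+1))) := closedBall x₀ (3/4 : ℝ) ∩ T with hSdef
    have hSm : MeasurableSet S := measurableSet_closedBall.inter hTm
    have hScb : S ⊆ closedBall x₀ (3/4 : ℝ) := Set.inter_subset_left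
    have hST : S ⊆ T := Set.inter_subset_right
    have hdiffm : MeasurableSet (closedBall x₀ (3/4 : ℝ) \ S) := measurableSet_closedBall.diff hSm
    have hvol_diff_fin : volume (closedBall x₀ (3/4 : ℝ) \ S) < ⊤ :=
      lt_of_le_of_lt (measure_mono Set.diff_subset) measure_closedBall_lt_top
    have hsplit : ∫ x in closedBall x₀ (3/4 : ℝ), |u x|
        = (∫ x in S, |u x|) + ∫ x in closedBall x₀ (3/4 : ℝ) \ S, |u x| := by
      rw [show closedBall x₀ (3/4:ℝ) = S ∪ (closedBall x₀ (3/4:ℝ) \ S) from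
        (Set.union_diff_cancel hScb).symm]
      rw [setIntegral_union Set.disjoint_sdiff_right hdiffm
        (hIu.mono_set hScb) (hIu.mono_set Set.diff_subset)]
      rw [Set.union_diff_cancel hScb]
    have hdiff_bound : ∫ x in closedBall x₀ (3/4 : ℝ) \ S, |u x| ≤ c * V := by
      have h1 : ∫ x in closedBall x₀ (3/4 : ℝ) \ S, |u x|
          ≤ ∫ _x in closedBall x₀ (3/4 : ℝ) \ S, c := by
        refine setIntegral_mono_on (hIu.mono_set Set.diff_subset)
          (integrableOn_const hvol_diff_fin.ne) hdiffm ?_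
        intro x hx
        have hxball : x ∈ ball x₀ 1 := hsub hx.1
        have hxnT : x ∉ T := fun hT => hx.2 ⟨hx.1, hT⟩
        have : ¬ (c ≤ |u x|) := fun hcx => hxnT ⟨hxball, hcx⟩
        exact le_of_not_ge this
      rw [setIntegral_const] at h1
      have h2 : (volume (closedBall x₀ (3/4:ℝ) \ S)).toReal ≤ V := by
        rw [hVdef, ← Measure.addHaar_closedBall_center volume x₀]
        exact ENNReal.toReal_mono measure_closedBall_lt_top.ne
          (measure_mono Set.diff_subset)
      calc ∫ x in closedBall x₀ (3/4 : ℝ) \ S, |u x|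
          ≤ (volume (closedBall x₀ (3/4:ℝ) \ S)).toReal • c := h1
        _ = (volume (closedBall x₀ (3/4:ℝ) \ S)).toReal * c := by rw [smul_eq_mul]
        _ ≤ c * V := by
            rw [mul_comm]
            exact mul_le_mul_of_nonneg_left h2 hc.le
    have hS_lb : c ≤ ∫ x in S, |u x| := by
      have h1 : A / K = 2 * c * (1 + V) := by
        rw [hcdef]
        field_simp
      have h2 : (∫ x in S, |u x|) ≥ A / K - c * V := by
        have := hIlb
        rw [hsplit] at this
        linarith [hdiff_bound]
      rw [h1] at h2
      nlinarith [hc, hV0]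
    have hSpos : volume S ≠ 0 := by
      intro h0
      have h1 : ∫ x in S, |u x| = 0 := by
        rw [Measure.restrict_eq_zero.mpr h0]
        exact integral_zero_measure _
      rw [h1] at hS_lb
      linarith
    set M := eLpNorm u ∞ (volume.restrict (ball x₀ 1)) with hMdef
    show ENNReal.ofReal c ≤ M * volume T
    by_cases hM : M = ⊤
    · rw [hM, ENNReal.top_mul (fun h => hSpos (measure_mono_null hST h))]
      exact (by simp)
    · have hTball : T ⊆ ball x₀ 1 := fun x hx => hx.1
      have hae : ∀ᵐ x ∂(volume.restrict (ball x₀ 1)), |u x| ≤ M.toReal := by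
        have h1 := ae_le_eLpNormEssSup (f := u) (μ := volume.restrict (ball x₀ 1))
        have hMeq : M = eLpNormEssSup u (volume.restrict (ball x₀ 1)) := by
          rw [hMdef, eLpNorm_exponent_top]
        filter_upwards [h1] with x hx
        have h2 : ((‖u x‖₊ : ℝ≥0∞)).toReal ≤ M.toReal :=
          ENNReal.toReal_mono hM (by rw [hMeq]; exact hx)
        simpa [Real.norm_eq_abs] using h2
      have haeS : ∀ᵐ x ∂(volume.restrict S), |u x| ≤ M.toReal :=
        ae_restrict_of_ae_restrict_of_subset (fun x hx => hTball (hST hx)) hae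
      have hvolS_fin : volume S ≠ ⊤ :=
        (lt_of_le_of_lt (measure_mono hScb) measure_closedBall_lt_top).ne
      have hbound : ∫ x in S, |u x| ≤ M.toReal * (volume S).toReal := by
        have h2 : ∫ x in S, |u x| ≤ ∫ _x in S, M.toReal :=
          integral_mono_ae (hIu.mono_set hScb)
            (integrableOn_const (lt_of_le_of_lt (measure_mono hScb)
              measure_closedBall_lt_top).ne) haeS
        rw [setIntegral_const, smul_eq_mul, measureReal_def] at h2
        linarith [h2]
      calc ENNReal.ofReal c ≤ ENNReal.ofReal (M.toReal * (volume S).toReal) :=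
            ENNReal.ofReal_le_ofReal (le_trans hS_lb hbound)
        _ = M * volume S := by
            rw [ENNReal.ofReal_mul ENNReal.toReal_nonneg, ENNReal.ofReal_toReal hM,
              ENNReal.ofReal_toReal hvolS_fin]
        _ ≤ M * volume T := mul_le_mul_right (measure_mono hST) M
end

section
/- Let Ω₁ ⊆ ℝ^{n₁} be open and bounded, let c > 0, let 1 ≤ p ≤ ∞ with conjugate exponent p', and suppose S is a set of measurable functions on Ω₁ such that every u ∈ S satisfies ‖u‖_{L^p(Ω₁)} · |{x ∈ Ω₁ : |u(x)| ≥ c}|^{1/p'} ≥ c. Let Ω₂ ⊆ ℝ^{n₂} be open and bounded, and let Ω ⊆ ℝ^{n₁+n₂} be a measurable set containing Ω₁ × Ω₂. Then every measurable function v on Ω whose restriction v(·, y) to Ω₁ × {y} belongs to S for each y ∈ Ω₂ satisfies ‖v‖_{L^p(Ω)} · |{(x,y) ∈ Ω : |v(x,y)| ≥ c}|^{1/p'} ≥ c |Ω₂|. -/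
open MeasureTheory Metric Set ENNReal

/-! Integrate the slice inequality over `y ∈ Ω₂` and apply Hölder's inequality in `y`. By Fubini,
the `L^p(Ω₂)` norm of `y ↦ ‖v(·, y)‖_{L^p(Ω₁)}` is `‖v‖_{L^p(Ω₁ × Ω₂)}` (for `p = ∞` it is
a.e. bounded by it), and the `L^q(Ω₂)` norm of `y ↦ |{x ∈ Ω₁ : |v(x, y)| ≥ c}|^{1/q}` is at most
`|{z ∈ Ω₁ × Ω₂ : |v z| ≥ c}|^{1/q}`. Enlarging `Ω₁ × Ω₂` to `Ω` only increases both factors. -/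

namespace MeasureTheory

variable {α β : Type*} [MeasurableSpace α] [MeasurableSpace β] {μ : Measure α} {ν : Measure β}

theorem lintegral_mul_le_eLpNormEssSup_mul_lintegral (f : α → ℝ≥0∞) {g : α → ℝ≥0∞}
    (hg : AEMeasurable g μ) :
    ∫⁻ x, f x * g x ∂μ ≤ eLpNormEssSup f μ * ∫⁻ x, g x ∂μ :=
  calc ∫⁻ x, f x * g x ∂μ ≤ ∫⁻ x, eLpNormEssSup f μ * g x ∂μ :=
        lintegral_mono_ae <| (enorm_ae_le_eLpNormEssSup f μ).mono fun _ hx => by gcongr; exact hx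
    _ = eLpNormEssSup f μ * ∫⁻ x, g x ∂μ := lintegral_const_mul'' _ hg

theorem lintegral_mul_le_eLpNorm_mul_eLpNorm {p q : ℝ≥0∞} [p.HolderConjugate q]
    {f g : α → ℝ≥0∞} (hf : AEMeasurable f μ) (hg : AEMeasurable g μ) :
    ∫⁻ x, f x * g x ∂μ ≤ eLpNorm f p μ * eLpNorm g q μ := by
  by_cases hp : p = ∞
  · obtain rfl : q = 1 := (HolderConjugate.eq_top_iff_eq_one p q).mp hp
    subst hp
    simpa [eLpNorm_one_eq_lintegral_enorm] using lintegral_mul_le_eLpNormEssSup_mul_lintegral f hg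
  by_cases hq : q = ∞
  · obtain rfl : p = 1 := (HolderConjugate.eq_top_iff_eq_one q p).mp hq
    subst hq
    simpa [eLpNorm_one_eq_lintegral_enorm, mul_comm] using
      lintegral_mul_le_eLpNormEssSup_mul_lintegral g hf
  rw [eLpNorm_eq_lintegral_rpow_enorm_toReal (HolderConjugate.ne_zero p q) hp,
    eLpNorm_eq_lintegral_rpow_enorm_toReal (HolderConjugate.ne_zero q p) hq]
  simpa using ENNReal.lintegral_mul_le_Lp_mul_Lq μ (HolderConjugate.toReal_of_ne_top hp hq) hf hg

theorem eLpNorm_rpow_one_div_le_rpow_lintegral (g : α → ℝ≥0∞) (q : ℝ≥0∞) :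
    eLpNorm (fun x => g x ^ (1 / q).toReal) q μ ≤ (∫⁻ x, g x ∂μ) ^ (1 / q).toReal := by
  rcases eq_or_ne q 0 with rfl | hq0
  · simp
  rcases eq_or_ne q ∞ with rfl | hq
  · simpa using eLpNormEssSup_le_of_ae_enorm_bound (ae_of_all μ fun _ => le_refl (1 : ℝ≥0∞))
  have hq0' : q.toReal ≠ 0 := (toReal_pos hq0 hq).ne'
  rw [eLpNorm_eq_lintegral_rpow_enorm_toReal hq0 hq, toReal_div, toReal_one]
  simp only [enorm_eq_self, ← ENNReal.rpow_mul, one_div_mul_cancel hq0', ENNReal.rpow_one]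
  exact le_rfl

variable [SFinite μ] [SFinite ν] {E : Type*} [NormedAddCommGroup E]

theorem eLpNorm_eLpNorm_slice_eq {f : α × β → E} (hf : AEStronglyMeasurable f (μ.prod ν))
    {p : ℝ≥0∞} (hp0 : p ≠ 0) (hp : p ≠ ∞) :
    eLpNorm (fun y => eLpNorm (fun x => f (x, y)) p μ) p ν = eLpNorm f p (μ.prod ν) := by
  have hp0' : p.toReal ≠ 0 := (toReal_pos hp0 hp).ne'
  simp only [eLpNorm_eq_lintegral_rpow_enorm_toReal hp0 hp, enorm_eq_self, ← ENNReal.rpow_mul,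
    one_div_mul_cancel hp0', ENNReal.rpow_one]
  rw [lintegral_prod_symm _ (hf.enorm.pow_const _)]

theorem ae_eLpNormEssSup_slice_le (f : α × β → E) :
    ∀ᵐ y ∂ν, eLpNormEssSup (fun x => f (x, y)) μ ≤ eLpNormEssSup f (μ.prod ν) := by
  have h := Measure.measurePreserving_swap.quasiMeasurePreserving.ae
    (enorm_ae_le_eLpNormEssSup f (μ.prod ν))
  filter_upwards [Measure.ae_ae_of_ae_prod h] with y hy using essSup_le_of_ae_le _ hy

theorem lintegral_eLpNorm_slice_mul_measure_slice_le {f : α × β → E}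
    (hf : AEStronglyMeasurable f (μ.prod ν)) (p q : ℝ≥0∞) [p.HolderConjugate q]
    {s : Set (α × β)} (hs : MeasurableSet s) :
    ∫⁻ y, eLpNorm (fun x => f (x, y)) p μ * μ ((fun x => (x, y)) ⁻¹' s) ^ (1 / q).toReal ∂ν ≤
      eLpNorm f p (μ.prod ν) * μ.prod ν s ^ (1 / q).toReal := by
  have hG := measurable_measure_prodMk_right (μ := μ) hs
  rw [Measure.prod_apply_symm hs]
  by_cases hp : p = ∞
  -- `y ↦ ‖f(·, y)‖_∞` is not known to be measurable, so Hölder is replaced by an `essSup` bound.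
  · obtain rfl : q = 1 := (HolderConjugate.eq_top_iff_eq_one p q).mp hp
    subst hp
    simp only [div_one, toReal_one, ENNReal.rpow_one, eLpNorm_exponent_top]
    calc _ ≤ eLpNormEssSup (fun y => eLpNormEssSup (fun x => f (x, y)) μ) ν *
          ∫⁻ y, μ ((fun x => (x, y)) ⁻¹' s) ∂ν :=
          lintegral_mul_le_eLpNormEssSup_mul_lintegral _ hG.aemeasurable
      _ ≤ _ := by
          gcongr
          simpa using eLpNormEssSup_le_of_ae_enorm_bound (ae_eLpNormEssSup_slice_le (ν := ν) f)
  have hp0 := HolderConjugate.ne_zero p q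
  have hF : AEMeasurable (fun y => eLpNorm (fun x => f (x, y)) p μ) ν := by
    simp only [eLpNorm_eq_lintegral_rpow_enorm_toReal hp0 hp]
    exact ((hf.enorm.pow_const _).lintegral_prod_left').pow_const _
  calc _ ≤ eLpNorm (fun y => eLpNorm (fun x => f (x, y)) p μ) p ν *
        eLpNorm (fun y => μ ((fun x => (x, y)) ⁻¹' s) ^ (1 / q).toReal) q ν :=
        lintegral_mul_le_eLpNorm_mul_eLpNorm hF (hG.pow_const _).aemeasurable
    _ ≤ _ := by
        rw [eLpNorm_eLpNorm_slice_eq hf hp0 hp]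
        gcongr
        exact eLpNorm_rpow_one_div_le_rpow_lintegral _ q

end MeasureTheory

theorem uniformly_balancing_lift_general (n₁ n₂ : ℕ)
    (Ω₁ : Set (EuclideanSpace ℝ (Fin n₁)))
    (c : ℝ) (p q : ℝ≥0∞) (hpq : 1 / p + 1 / q = 1)
    (S : Set (EuclideanSpace ℝ (Fin n₁) → ℝ))
    (hS : ∀ u ∈ S,
      ENNReal.ofReal c ≤
        eLpNorm u p (volume.restrict Ω₁) *
          volume {x ∈ Ω₁ | c ≤ |u x|} ^ (1 / q).toReal)
    (Ω₂ : Set (EuclideanSpace ℝ (Fin n₂))) (hΩ₂o : IsOpen Ω₂)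
    (Ω : Set (EuclideanSpace ℝ (Fin n₁) × EuclideanSpace ℝ (Fin n₂)))
    (hΩsub : Ω₁ ×ˢ Ω₂ ⊆ Ω)
    (v : EuclideanSpace ℝ (Fin n₁) × EuclideanSpace ℝ (Fin n₂) → ℝ)
    (hv : Measurable v)
    (hslice : ∀ y ∈ Ω₂, (fun x => v (x, y)) ∈ S) :
    ENNReal.ofReal c * volume Ω₂ ≤
      eLpNorm v p (volume.restrict Ω) *
        volume {z ∈ Ω | c ≤ |v z|} ^ (1 / q).toReal := by
  have : p.HolderConjugate q := ⟨by simpa using hpq⟩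
  set s := {z | c ≤ |v z|}
  have hs : MeasurableSet s := measurableSet_le measurable_const hv.abs
  have hslice_le : ∀ y ∈ Ω₂, ENNReal.ofReal c ≤ eLpNorm (fun x => v (x, y)) p (volume.restrict Ω₁)
      * volume.restrict Ω₁ ((fun x => (x, y)) ⁻¹' s) ^ (1 / q).toReal := fun y hy => by
    rw [Measure.restrict_apply (measurable_prodMk_right hs), inter_comm]
    exact hS _ (hslice y hy)
  have hprod : volume.restrict (Ω₁ ×ˢ Ω₂) = (volume.restrict Ω₁).prod (volume.restrict Ω₂) := by
    rw [Measure.volume_eq_prod, Measure.prod_restrict]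
  calc ENNReal.ofReal c * volume Ω₂ = ∫⁻ _ in Ω₂, ENNReal.ofReal c := (setLIntegral_const _ _).symm
    _ ≤ ∫⁻ y in Ω₂, eLpNorm (fun x => v (x, y)) p (volume.restrict Ω₁) *
          volume.restrict Ω₁ ((fun x => (x, y)) ⁻¹' s) ^ (1 / q).toReal :=
        setLIntegral_mono' hΩ₂o.measurableSet hslice_le
    _ ≤ eLpNorm v p (volume.restrict (Ω₁ ×ˢ Ω₂)) * volume.restrict (Ω₁ ×ˢ Ω₂) s ^ (1 / q).toReal := by
        rw [hprod]
        exact lintegral_eLpNorm_slice_mul_measure_slice_le hv.aestronglyMeasurable p q hs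
    _ ≤ _ := by
        rw [Measure.restrict_apply hs]
        gcongr
        exact fun z hz => ⟨hΩsub hz.2, hz.1⟩

/-- lifting uniformly balancing sublevel inequalities to higher dimensions.
If every `u` in a set `S` of measurable functions on an open bounded `Ω₁ ⊆ ℝ^{n₁}` satisfies
`‖u‖_{L^p(Ω₁)} · |{x ∈ Ω₁ : |u(x)| ≥ c}|^(1/q) ≥ c` (where `1/p + 1/q = 1`), and
`Ω ⊆ ℝ^{n₁} × ℝ^{n₂}` is a measurable set containing `Ω₁ × Ω₂` with `Ω₂` open and bounded,
then every measurable `v` on `Ω` all of whose slices `v(·,y)`, `y ∈ Ω₂`, belong to `S`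
satisfies `‖v‖_{L^p(Ω)} · |{(x,y) ∈ Ω : |v(x,y)| ≥ c}|^(1/q) ≥ c |Ω₂|`. -/
theorem uniformly_balancing_lift (n₁ n₂ : ℕ)
    (Ω₁ : Set (EuclideanSpace ℝ (Fin n₁))) (hΩ₁o : IsOpen Ω₁)
    (hΩ₁b : Bornology.IsBounded Ω₁)
    (c : ℝ) (hc : 0 < c) (p q : ℝ≥0∞) (hp : 1 ≤ p) (hpq : 1 / p + 1 / q = 1)
    (S : Set (EuclideanSpace ℝ (Fin n₁) → ℝ))
    (hSmeas : ∀ u ∈ S, Measurable u)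
    (hS : ∀ u ∈ S,
      ENNReal.ofReal c ≤
        eLpNorm u p (volume.restrict Ω₁) *
          volume {x ∈ Ω₁ | c ≤ |u x|} ^ (1 / q).toReal)
    (Ω₂ : Set (EuclideanSpace ℝ (Fin n₂))) (hΩ₂o : IsOpen Ω₂)
    (hΩ₂b : Bornology.IsBounded Ω₂)
    (Ω : Set (EuclideanSpace ℝ (Fin n₁) × EuclideanSpace ℝ (Fin n₂)))
    (hΩmeas : MeasurableSet Ω) (hΩsub : Ω₁ ×ˢ Ω₂ ⊆ Ω)
    (v : EuclideanSpace ℝ (Fin n₁) × EuclideanSpace ℝ (Fin n₂) → ℝ)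
    (hv : Measurable v)
    (hslice : ∀ y ∈ Ω₂, (fun x => v (x, y)) ∈ S) :
    ENNReal.ofReal c * volume Ω₂ ≤
      eLpNorm v p (volume.restrict Ω) *
        volume {z ∈ Ω | c ≤ |v z|} ^ (1 / q).toReal :=
  uniformly_balancing_lift_general n₁ n₂ Ω₁ c p q hpq S hS Ω₂ hΩ₂o Ω hΩsub v hv hslice
end

section
/- For N ≥ 1 define u_N : ℝ² → ℝ by u_N(x,y) = N^{-1} e^x sin(Ny), and define the nonlinear differential operator D by Du = (∂²u/∂x∂y)² − (∂²u/∂x²)(∂²u/∂y²). Then (i) Du_N(x,y) = e^{2x} ≥ 1 for all (x,y) ∈ [0,1]², and (ii) for every c > 0 there exists N such that the set {(x,y) ∈ [0,1]² : |u_N(x,y)| ≥ c} is empty. In particular, there exist no constants c > 0 and 1 ≤ p ≤ ∞ such that ‖u‖_{L^p([0,1]²)} · |{z ∈ [0,1]² : |u(z)| ≥ c}|^{1/p'} ≥ c holds for all smooth u with Du ≥ 1 on [0,1]². -/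
open MeasureTheory Set ENNReal

/-- The nonlinear operator `Du = (∂²_{xy}u)² − (∂²_{xx}u)(∂²_{yy}u)` (the negative of the
determinant of the Hessian of `u : ℝ² → ℝ`). -/
noncomputable def negHessDet (u : ℝ × ℝ → ℝ) (z : ℝ × ℝ) : ℝ :=
  (deriv (fun y => deriv (fun x => u (x, y)) z.1) z.2) ^ 2 -
    iteratedDeriv 2 (fun x => u (x, z.2)) z.1 * iteratedDeriv 2 (fun y => u (z.1, y)) z.2

/-- The family `u_N(x,y) = N⁻¹ eˣ sin(Ny)`. -/
noncomputable def uN (N : ℝ) (z : ℝ × ℝ) : ℝ :=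
  N⁻¹ * Real.exp z.1 * Real.sin (N * z.2)

lemma uN_deriv_x (N y x : ℝ) :
    deriv (fun x => uN N (x, y)) x = N⁻¹ * Real.exp x * Real.sin (N * y) := by
  have h : HasDerivAt (fun x => uN N (x, y)) (N⁻¹ * Real.exp x * Real.sin (N * y)) x := by
    have := ((Real.hasDerivAt_exp x).const_mul N⁻¹).mul_const (Real.sin (N * y))
    simpa [uN] using this
  exact h.deriv

lemma hasDerivAt_sinN (N y : ℝ) :
    HasDerivAt (fun y => Real.sin (N * y)) (N * Real.cos (N * y)) y := by
  simpa [mul_comm, Function.comp_def] using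
    (Real.hasDerivAt_sin (N * y)).comp y ((hasDerivAt_id y).const_mul N)

lemma hasDerivAt_cosN (N y : ℝ) :
    HasDerivAt (fun y => Real.cos (N * y)) (-(N * Real.sin (N * y))) y := by
  simpa [mul_comm, Function.comp_def] using
    (Real.hasDerivAt_cos (N * y)).comp y ((hasDerivAt_id y).const_mul N)

lemma uN_deriv_xy (N : ℝ) (z : ℝ × ℝ) :
    deriv (fun y => deriv (fun x => uN N (x, y)) z.1) z.2
      = N⁻¹ * Real.exp z.1 * (N * Real.cos (N * z.2)) := by
  have heq : (fun y => deriv (fun x => uN N (x, y)) z.1)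
      = fun y => N⁻¹ * Real.exp z.1 * Real.sin (N * y) := funext fun y => uN_deriv_x N y z.1
  rw [heq]
  exact ((hasDerivAt_sinN N z.2).const_mul (N⁻¹ * Real.exp z.1)).deriv

lemma uN_iter_x (N : ℝ) (z : ℝ × ℝ) :
    iteratedDeriv 2 (fun x => uN N (x, z.2)) z.1 = uN N z := by
  have hf : deriv (fun x => uN N (x, z.2)) = fun x => uN N (x, z.2) :=
    funext fun x => by rw [uN_deriv_x]; simp [uN]
  rw [show (2 : ℕ) = 1 + 1 from rfl, iteratedDeriv_succ, iteratedDeriv_one, hf, hf]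

lemma uN_iter_y (N : ℝ) (z : ℝ × ℝ) :
    iteratedDeriv 2 (fun y => uN N (z.1, y)) z.2
      = -(N⁻¹ * Real.exp z.1 * (N * (N * Real.sin (N * z.2)))) := by
  have hf : deriv (fun y => uN N (z.1, y))
      = fun y => N⁻¹ * Real.exp z.1 * (N * Real.cos (N * y)) := by
    funext y
    exact ((hasDerivAt_sinN N y).const_mul (N⁻¹ * Real.exp z.1)).deriv
  rw [show (2 : ℕ) = 1 + 1 from rfl, iteratedDeriv_succ, iteratedDeriv_one, hf]
  have h2 : HasDerivAt (fun y => N⁻¹ * Real.exp z.1 * (N * Real.cos (N * y)))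
      (-(N⁻¹ * Real.exp z.1 * (N * (N * Real.sin (N * z.2))))) z.2 := by
    have := ((hasDerivAt_cosN N z.2).const_mul N).const_mul (N⁻¹ * Real.exp z.1)
    refine this.congr_deriv ?_
    ring
  exact h2.deriv

lemma negHessDet_uN (N : ℝ) (hN : N ≠ 0) (z : ℝ × ℝ) :
    negHessDet (uN N) z = Real.exp (2 * z.1) := by
  have hs := Real.sin_sq_add_cos_sq (N * z.2)
  rw [negHessDet, uN_deriv_xy, uN_iter_x, uN_iter_y, uN]
  have hNN : N⁻¹ * N = 1 := inv_mul_cancel₀ hN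
  have h2 : Real.exp (2 * z.1) = Real.exp z.1 * Real.exp z.1 := by
    rw [two_mul, Real.exp_add]
  rw [h2]
  have key : (N⁻¹ * Real.exp z.1 * (N * Real.cos (N * z.2))) ^ 2 -
      N⁻¹ * Real.exp z.1 * Real.sin (N * z.2) *
        -(N⁻¹ * Real.exp z.1 * (N * (N * Real.sin (N * z.2)))) =
      (N⁻¹ * N) ^ 2 * (Real.exp z.1 * Real.exp z.1) *
        (Real.sin (N * z.2) ^ 2 + Real.cos (N * z.2) ^ 2) := by ring
  rw [key, hNN, hs]
  ring

lemma uN_smooth (N : ℝ) : ContDiff ℝ (⊤ : ℕ∞) (uN N) := by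
  unfold uN
  exact (contDiff_const.mul (Real.contDiff_exp.comp contDiff_fst)).mul
    (Real.contDiff_sin.comp (contDiff_const.mul contDiff_snd))

lemma uN_bound (c : ℝ) (hc : 0 < c) :
    ∃ N : ℝ, 1 ≤ N ∧ ∀ z : ℝ × ℝ, z.1 ≤ 1 → |uN N z| ≤ Real.exp 1 * c / 3 := by
  refine ⟨max 1 (3 / c), le_max_left _ _, fun z hz => ?_⟩
  set N := max 1 (3 / c) with hNdef
  have hN0 : 0 < N := lt_of_lt_of_le one_pos (le_max_left _ _)
  have hNc : 3 / c ≤ N := le_max_right _ _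
  have hinv : N⁻¹ ≤ c / 3 := by
    rw [inv_le_comm₀ hN0 (by positivity), inv_div]
    exact hNc
  have habs : |uN N z| = N⁻¹ * Real.exp z.1 * |Real.sin (N * z.2)| := by
    rw [uN, abs_mul, abs_mul, abs_of_pos (inv_pos.mpr hN0), abs_of_pos (Real.exp_pos _)]
  rw [habs]
  have h1 : |Real.sin (N * z.2)| ≤ 1 := Real.abs_sin_le_one _
  have h2 : Real.exp z.1 ≤ Real.exp 1 := Real.exp_le_exp.mpr hz
  have h3 : (0:ℝ) < Real.exp 1 := Real.exp_pos 1
  calc N⁻¹ * Real.exp z.1 * |Real.sin (N * z.2)| ≤ N⁻¹ * Real.exp z.1 * 1 := by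
        have : 0 ≤ N⁻¹ * Real.exp z.1 := by positivity
        nlinarith
    _ = N⁻¹ * Real.exp z.1 := mul_one _
    _ ≤ (c / 3) * Real.exp 1 := by
        apply mul_le_mul hinv h2 (Real.exp_pos _).le (by positivity)
    _ = Real.exp 1 * c / 3 := by ring

lemma C_lt (c : ℝ) (hc : 0 < c) : Real.exp 1 * c / 3 < c := by
  nlinarith [Real.exp_one_lt_d9]

lemma empty_set (c : ℝ) (hc : 0 < c) (N : ℝ)
    (hb : ∀ z : ℝ × ℝ, z.1 ≤ 1 → |uN N z| ≤ Real.exp 1 * c / 3) :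
    {z ∈ (Set.Icc (0 : ℝ) 1) ×ˢ (Set.Icc (0 : ℝ) 1) | c ≤ |uN N z|} = ∅ := by
  ext z
  simp only [Set.mem_sep_iff, Set.mem_empty_iff_false, iff_false, not_and]
  intro hz hcz
  have := hb z hz.1.2
  linarith [C_lt c hc]

/-- failure of a uniformly balancing sublevel inequality for
`Du = (∂²_{xy}u)² − (∂²_{xx}u)(∂²_{yy}u)`. (i) `Du_N = e^{2x} ≥ 1` on `[0,1]²`;
(ii) for every `c > 0` there is `N ≥ 1` such that `{z ∈ [0,1]² : |u_N(z)| ≥ c} = ∅`;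
(iii) consequently no constants `c > 0` and `1 ≤ p ≤ ∞` give
`‖u‖_{L^p([0,1]²)} · |{z ∈ [0,1]² : |u(z)| ≥ c}|^(1/p')} ≥ c` for all smooth `u` with
`Du ≥ 1` on `[0,1]²`. -/
theorem negHessDet_no_uniformly_balancing :
    (∀ N : ℝ, 1 ≤ N → ∀ z ∈ (Set.Icc (0 : ℝ) 1) ×ˢ (Set.Icc (0 : ℝ) 1),
        negHessDet (uN N) z = Real.exp (2 * z.1) ∧ 1 ≤ negHessDet (uN N) z) ∧
    (∀ c : ℝ, 0 < c → ∃ N : ℝ, 1 ≤ N ∧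
        {z ∈ (Set.Icc (0 : ℝ) 1) ×ˢ (Set.Icc (0 : ℝ) 1) | c ≤ |uN N z|} = ∅) ∧
    ¬ ∃ c : ℝ, 0 < c ∧ ∃ p q : ℝ≥0∞, 1 ≤ p ∧ 1 / p + 1 / q = 1 ∧
        ∀ u : ℝ × ℝ → ℝ, ContDiff ℝ (⊤ : ℕ∞) u →
          (∀ z ∈ (Set.Icc (0 : ℝ) 1) ×ˢ (Set.Icc (0 : ℝ) 1), 1 ≤ negHessDet u z) →
          ENNReal.ofReal c ≤
            eLpNorm u p (volume.restrict ((Set.Icc (0 : ℝ) 1) ×ˢ (Set.Icc (0 : ℝ) 1))) *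
              volume {z ∈ (Set.Icc (0 : ℝ) 1) ×ˢ (Set.Icc (0 : ℝ) 1) | c ≤ |u z|} ^
                (1 / q).toReal := by
  have hDN : ∀ N : ℝ, N ≠ 0 → ∀ z ∈ (Set.Icc (0 : ℝ) 1) ×ˢ (Set.Icc (0 : ℝ) 1),
      negHessDet (uN N) z = Real.exp (2 * z.1) ∧ 1 ≤ negHessDet (uN N) z := by
    intro N hN0 z hz
    refine ⟨negHessDet_uN N hN0 z, ?_⟩
    rw [negHessDet_uN N hN0 z]
    calc (1:ℝ) = Real.exp 0 := Real.exp_zero.symm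
      _ ≤ _ := Real.exp_le_exp.mpr (by linarith [hz.1.1])
  refine ⟨fun N hN => hDN N (by linarith), ?_, ?_⟩
  · intro c hc
    obtain ⟨N, hN1, hb⟩ := uN_bound c hc
    exact ⟨N, hN1, empty_set c hc N hb⟩
  · rintro ⟨c, hc, p, q, hp, hpq, H⟩
    obtain ⟨N, hN1, hb⟩ := uN_bound c hc
    have hN0 : N ≠ 0 := by linarith
    have hkey := H (uN N) (uN_smooth N) (fun z hz => (hDN N hN0 z hz).2)
    rw [empty_set c hc N hb, measure_empty] at hkey
    have hμuniv : (volume.restrict ((Set.Icc (0 : ℝ) 1) ×ˢ (Set.Icc (0 : ℝ) 1)))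
        Set.univ = 1 := by
      rw [Measure.restrict_apply_univ, Measure.volume_eq_prod, Measure.prod_prod,
        Real.volume_Icc]
      norm_num
    have hbound : eLpNorm (uN N) p
        (volume.restrict ((Set.Icc (0 : ℝ) 1) ×ˢ (Set.Icc (0 : ℝ) 1)))
        ≤ ENNReal.ofReal (Real.exp 1 * c / 3) := by
      have hae : ∀ᵐ z ∂(volume.restrict ((Set.Icc (0 : ℝ) 1) ×ˢ (Set.Icc (0 : ℝ) 1))),
          ‖uN N z‖ ≤ Real.exp 1 * c / 3 := by
        refine (ae_restrict_iff' (measurableSet_Icc.prod measurableSet_Icc)).2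
          (Filter.Eventually.of_forall fun z hz => ?_)
        simpa [Real.norm_eq_abs] using hb z hz.1.2
      calc eLpNorm (uN N) p _ ≤ _ := eLpNorm_le_of_ae_bound hae
        _ = ENNReal.ofReal (Real.exp 1 * c / 3) := by
          rw [hμuniv, ENNReal.one_rpow, one_mul]
    have hpow : (0 : ℝ≥0∞) ^ (1/q).toReal ≤ 1 := by
      rcases eq_or_ne (1/q).toReal 0 with h | h
      · rw [h, ENNReal.rpow_zero]
      · rw [ENNReal.zero_rpow_of_pos (lt_of_le_of_ne ENNReal.toReal_nonneg (Ne.symm h))]; exact zero_le_one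
    have hfin : ENNReal.ofReal c ≤ ENNReal.ofReal (Real.exp 1 * c / 3) := by
      calc ENNReal.ofReal c ≤ _ := hkey
        _ ≤ ENNReal.ofReal (Real.exp 1 * c / 3) * 1 := mul_le_mul' hbound hpow
        _ = _ := mul_one _
    exact absurd hfin ((ENNReal.ofReal_lt_ofReal_iff hc).mpr (C_lt c hc)).not_ge
end

section
/- Fix integers n ≥ 1 and m ≥ 3 and r > 0. Define A(y,s) = (2s(m+n) log(r²/(4πs)) − |y|²)^{1/2} and the kernel K_r(y,s) = (1/(4 r^{m+n})) · (2|B₁ᵐ|/(m+2)) · A(y,s)^m · ( (m(m+n)/s) log(r²/(4πs)) + |y|²/s² ), where |B₁ᵐ| is the Lebesgue measure of the unit ball in ℝᵐ, on the (n,m)-modified heatball domain Ẽ_m(r) = {(y,s) ∈ ℝⁿ × (0, r²/(4π)] : |y|² ≤ 2(m+n) s log(r²/(4πs))}. Then K_r is bounded on Ẽ_m(r) by a constant depending only on n, m and r; in particular K_r extends continuously to (0,0) with limit 0, since K_r(y,s) is dominated on Ẽ_m(r) by a constant (depending on n, m, r) times s^{(m−2)/2} log(r²/(4πs))^{(m+2)/2},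 which tends to 0 as s → 0. -/
open MeasureTheory Metric Set ENNReal

/-- The `(n,m)`-modified heatball domain
`Ẽ_m(r) = {(y,s) ∈ ℝⁿ × (0, r²/(4π)] : |y|² ≤ 2(m+n) s log(r²/(4πs))}`. -/
def modHeatBall (n m : ℕ) (r : ℝ) : Set (EuclideanSpace ℝ (Fin n) × ℝ) :=
  {z | 0 < z.2 ∧ z.2 ≤ r ^ 2 / (4 * Real.pi) ∧
    ‖z.1‖ ^ 2 ≤ 2 * (m + n) * z.2 * Real.log (r ^ 2 / (4 * Real.pi * z.2))}

/-- `A(y,s) = (2s(m+n) log(r²/(4πs)) − |y|²)^{1/2}`. -/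
noncomputable def Afun (n m : ℕ) (r : ℝ) (z : EuclideanSpace ℝ (Fin n) × ℝ) : ℝ :=
  Real.sqrt (2 * z.2 * (m + n) * Real.log (r ^ 2 / (4 * Real.pi * z.2)) - ‖z.1‖ ^ 2)

/-- The kernel of the average over the `(n,m)`-modified heatball:
`K_r(y,s) = (1/(4 r^{m+n})) (2|B₁ᵐ|/(m+2)) A(y,s)^m ((m(m+n)/s) log(r²/(4πs)) + |y|²/s²)`. -/
noncomputable def Kker (n m : ℕ) (r : ℝ) (z : EuclideanSpace ℝ (Fin n) × ℝ) : ℝ :=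
  (1 / (4 * r ^ (m + n))) *
    (2 * (volume (ball (0 : EuclideanSpace ℝ (Fin m)) 1)).toReal / (m + 2)) *
    Afun n m r z ^ m *
    ((m * (m + n) / z.2) * Real.log (r ^ 2 / (4 * Real.pi * z.2)) + ‖z.1‖ ^ 2 / z.2 ^ 2)

section Aux16
open Real Filter

private lemma saLb_le (a b c₀ : ℝ) (ha : 0 < a) (hb : 0 < b) (hc : 0 < c₀)
    {s : ℝ} (hs : 0 < s) (hsle : s ≤ c₀) :
    s ^ a * Real.log (c₀ / s) ^ b ≤ c₀ ^ a / (a / b) ^ b := by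
  set ε := a / b with hεdef
  have hεpos : 0 < ε := div_pos ha hb
  have hx1 : (1:ℝ) ≤ c₀ / s := (one_le_div hs).mpr hsle
  have hxpos : 0 < c₀ / s := lt_of_lt_of_le one_pos hx1
  have hL0 : 0 ≤ Real.log (c₀ / s) := Real.log_nonneg hx1
  have hlog : Real.log (c₀ / s) ≤ (c₀ / s) ^ ε / ε := by
    rw [le_div_iff₀ hεpos, mul_comm, ← Real.log_rpow hxpos]
    have := Real.log_le_sub_one_of_pos (Real.rpow_pos_of_pos hxpos ε)
    linarith
  have h1 : Real.log (c₀ / s) ^ b ≤ ((c₀ / s) ^ ε / ε) ^ b :=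
    Real.rpow_le_rpow hL0 hlog hb.le
  have h2 : ((c₀ / s) ^ ε / ε) ^ b = (c₀ / s) ^ a / ε ^ b := by
    rw [Real.div_rpow (Real.rpow_pos_of_pos hxpos ε).le hεpos.le,
      ← Real.rpow_mul hxpos.le]
    rw [show ε * b = a from div_mul_cancel₀ a hb.ne']
  have h3 : s ^ a * ((c₀ / s) ^ a / ε ^ b) = c₀ ^ a / ε ^ b := by
    rw [Real.div_rpow hc.le hs.le]
    have : (0:ℝ) < s ^ a := Real.rpow_pos_of_pos hs a
    field_simp
  calc s ^ a * Real.log (c₀ / s) ^ b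
      ≤ s ^ a * ((c₀ / s) ^ ε / ε) ^ b := by
        apply mul_le_mul_of_nonneg_left h1 (Real.rpow_pos_of_pos hs a).le
    _ = c₀ ^ a / ε ^ b := by rw [h2, h3]

private lemma tendsto_saLb (a b c₀ : ℝ) (ha : 0 < a) (hb : 0 < b) (hc : 0 < c₀) :
    Tendsto (fun s : ℝ => s ^ a * Real.log (c₀ / s) ^ b) (nhdsWithin 0 (Set.Ioi 0)) (nhds 0) := by
  set c := a / b with hcdef
  have hcpos : 0 < c := div_pos ha hb
  -- u s := s^c * log (c₀/s) tends to 0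
  have hrpow : Tendsto (fun s : ℝ => s ^ c) (nhdsWithin 0 (Set.Ioi 0)) (nhds 0) := by
    have h := (tendsto_id.mono_left (nhdsWithin_le_nhds :
        nhdsWithin (0:ℝ) (Set.Ioi 0) ≤ nhds 0)).rpow_const (Or.inr hcpos.le)
    simpa [Real.zero_rpow hcpos.ne'] using h
  have hu : Tendsto (fun s : ℝ => s ^ c * Real.log (c₀ / s)) (nhdsWithin 0 (Set.Ioi 0)) (nhds 0) := by
    have h1 : Tendsto (fun s : ℝ => s ^ c * Real.log c₀ - Real.log s * s ^ c)
        (nhdsWithin 0 (Set.Ioi 0)) (nhds 0) := by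
      have := (hrpow.mul_const (Real.log c₀)).sub (tendsto_log_mul_rpow_nhdsGT_zero hcpos)
      simpa using this
    refine h1.congr' ?_
    filter_upwards [self_mem_nhdsWithin] with s hs
    rw [Real.log_div hc.ne' (ne_of_gt hs)]
    ring
  -- now (s^c * log(c₀/s))^b = s^a * log(c₀/s)^b eventually
  have hub : Tendsto (fun s : ℝ => (s ^ c * Real.log (c₀ / s)) ^ b)
      (nhdsWithin 0 (Set.Ioi 0)) (nhds 0) := by
    have h := hu.rpow_const (Or.inr hb.le)
    simpa [Real.zero_rpow hb.ne'] using h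
  refine hub.congr' ?_
  have hmem : Set.Ioo (0:ℝ) c₀ ∈ nhdsWithin (0:ℝ) (Set.Ioi 0) :=
    Ioo_mem_nhdsGT_of_mem ⟨le_refl 0, hc⟩
  filter_upwards [hmem] with s hs
  have hs0 : 0 < s := hs.1
  have hL0 : 0 ≤ Real.log (c₀ / s) := Real.log_nonneg ((one_le_div hs0).mpr hs.2.le)
  rw [Real.mul_rpow (Real.rpow_pos_of_pos hs0 c).le hL0, ← Real.rpow_mul hs0.le,
    show c * b = a from div_mul_cancel₀ a hb.ne']

end Aux16

section key
variable (n m : ℕ) (r : ℝ)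

noncomputable def cKonst : ℝ :=
  (1 / (4 * r ^ (m + n))) *
    (2 * (volume (ball (0 : EuclideanSpace ℝ (Fin m)) 1)).toReal / (m + 2))

noncomputable def CKonst : ℝ :=
  cKonst n m r * (2 * ((m:ℝ) + n)) ^ ((m:ℝ)/2) * ((m:ℝ) * ((m:ℝ) + n) + 2 * ((m:ℝ) + n))

lemma cKonst_nonneg (hr : 0 < r) : 0 ≤ cKonst n m r := by
  apply mul_nonneg
  · positivity
  · positivity

lemma CKonst_nonneg (hr : 0 < r) : 0 ≤ CKonst n m r := by
  apply mul_nonneg (mul_nonneg (cKonst_nonneg n m r hr) (by positivity)) (by positivity)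

lemma log_nonneg_of_mem (hr : 0 < r) {z : EuclideanSpace ℝ (Fin n) × ℝ}
    (hz : z ∈ modHeatBall n m r) : 0 ≤ Real.log (r ^ 2 / (4 * Real.pi * z.2)) := by
  obtain ⟨hs, hsle, -⟩ := hz
  apply Real.log_nonneg
  rw [one_le_div (by positivity)]
  calc 4 * Real.pi * z.2 ≤ 4 * Real.pi * (r ^ 2 / (4 * Real.pi)) := by
        apply mul_le_mul_of_nonneg_left hsle (by positivity)
    _ = r ^ 2 := by field_simp

lemma Kker_le_key (hr : 0 < r) {z : EuclideanSpace ℝ (Fin n) × ℝ}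
    (hz : z ∈ modHeatBall n m r) :
    Kker n m r z ≤ CKonst n m r * z.2 ^ (((m : ℝ) - 2) / 2) *
      Real.log (r ^ 2 / (4 * Real.pi * z.2)) ^ (((m : ℝ) + 2) / 2) := by
  obtain ⟨hs, hsle, hy⟩ := hz
  set L := Real.log (r ^ 2 / (4 * Real.pi * z.2)) with hLdef
  have hL0 : 0 ≤ L := log_nonneg_of_mem n m r hr ⟨hs, hsle, hy⟩
  set U : ℝ := 2 * ((m:ℝ) + n) * z.2 * L with hUdef
  have hU0 : 0 ≤ U := le_trans (by positivity) hy
  have hA : Afun n m r z ≤ Real.sqrt U := by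
    apply Real.sqrt_le_sqrt
    have : (0:ℝ) ≤ ‖z.1‖ ^ 2 := by positivity
    rw [hUdef]; nlinarith
  have hAm : Afun n m r z ^ m ≤ Real.sqrt U ^ m :=
    pow_le_pow_left₀ (Real.sqrt_nonneg _) hA m
  have hsqrtU : Real.sqrt U ^ m = U ^ ((m:ℝ)/2) := by
    rw [Real.sqrt_eq_rpow, ← Real.rpow_natCast (U ^ ((1:ℝ)/2)) m, ← Real.rpow_mul hU0,
      show (1:ℝ)/2 * m = (m:ℝ)/2 by ring]
  have hK2 : (0:ℝ) ≤ 2 * ((m:ℝ) + n) := by positivity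
  have hUm : U ^ ((m:ℝ)/2) =
      (2 * ((m:ℝ) + n)) ^ ((m:ℝ)/2) * z.2 ^ ((m:ℝ)/2) * L ^ ((m:ℝ)/2) := by
    rw [hUdef, Real.mul_rpow (mul_nonneg hK2 hs.le) hL0, Real.mul_rpow hK2 hs.le]
  set D : ℝ := (m:ℝ) * ((m:ℝ) + n) + 2 * ((m:ℝ) + n) with hDdef
  set F : ℝ := ((m:ℝ) * ((m:ℝ) + n) / z.2) * L + ‖z.1‖ ^ 2 / z.2 ^ 2 with hFdef
  have hF0 : 0 ≤ F := add_nonneg (mul_nonneg (by positivity) hL0) (by positivity)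
  have hF : F ≤ D * L / z.2 := by
    have h2 : ‖z.1‖ ^ 2 / z.2 ^ 2 ≤ 2 * ((m:ℝ) + n) * L / z.2 := by
      rw [div_le_div_iff₀ (by positivity) hs]
      nlinarith
    have h3 : D * L / z.2 = ((m:ℝ) * ((m:ℝ) + n) / z.2) * L + 2 * ((m:ℝ) + n) * L / z.2 := by
      field_simp; ring
    rw [hFdef, h3]
    linarith
  have hz2 : z.2 ^ ((m:ℝ)/2) = z.2 ^ (((m:ℝ)-2)/2) * z.2 := by
    rw [show (m:ℝ)/2 = ((m:ℝ)-2)/2 + 1 by ring, Real.rpow_add hs, Real.rpow_one]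
  have hLe : L ^ (((m:ℝ)+2)/2) = L ^ ((m:ℝ)/2) * L := by
    rw [show ((m:ℝ)+2)/2 = (m:ℝ)/2 + 1 by ring, Real.rpow_add' hL0 (by positivity),
      Real.rpow_one]
  have hKeq : Kker n m r z = cKonst n m r * (Afun n m r z ^ m * F) := by
    rw [Kker, cKonst, hFdef]; push_cast; ring
  rw [hKeq]
  calc cKonst n m r * (Afun n m r z ^ m * F)
      ≤ cKonst n m r * (Real.sqrt U ^ m * (D * L / z.2)) := by
        apply mul_le_mul_of_nonneg_left _ (cKonst_nonneg n m r hr)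
        exact mul_le_mul hAm hF hF0 (pow_nonneg (Real.sqrt_nonneg _) m)
    _ = CKonst n m r * z.2 ^ (((m:ℝ)-2)/2) * L ^ (((m:ℝ)+2)/2) := by
        rw [hsqrtU, hUm, hz2, hLe, CKonst]
        field_simp
        ring

lemma Kker_nonneg (hr : 0 < r) {z : EuclideanSpace ℝ (Fin n) × ℝ}
    (hz : z ∈ modHeatBall n m r) : 0 ≤ Kker n m r z := by
  obtain ⟨hs, hsle, hy⟩ := hz
  have hL0 : 0 ≤ Real.log (r ^ 2 / (4 * Real.pi * z.2)) :=
    log_nonneg_of_mem n m r hr ⟨hs, hsle, hy⟩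
  rw [Kker]
  apply mul_nonneg (mul_nonneg (mul_nonneg (by positivity) (by positivity))
    (pow_nonneg (Real.sqrt_nonneg _) m))
  exact add_nonneg (mul_nonneg (by positivity) hL0) (by positivity)

end key

/-- For `n ≥ 1`, `m ≥ 3` and `r > 0`, the kernel `K_r` is bounded on the
modified heatball `Ẽ_m(r)` by a constant depending only on `n`, `m`, `r`; it is dominated
there by a constant times `s^{(m−2)/2} log(r²/(4πs))^{(m+2)/2}`; and it extends
continuously to `(0,0)` with limit `0`. -/
theorem modified_heatball_kernel_bounded (n m : ℕ) (hn : 1 ≤ n) (hm : 3 ≤ m)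
    (r : ℝ) (hr : 0 < r) :
    (∃ C : ℝ, ∀ z ∈ modHeatBall n m r, Kker n m r z ≤ C) ∧
    (∃ C : ℝ, 0 ≤ C ∧ ∀ z ∈ modHeatBall n m r,
      Kker n m r z ≤ C * z.2 ^ (((m : ℝ) - 2) / 2) *
        Real.log (r ^ 2 / (4 * Real.pi * z.2)) ^ (((m : ℝ) + 2) / 2)) ∧
    Filter.Tendsto (Kker n m r) (nhdsWithin (0, 0) (modHeatBall n m r)) (nhds 0) := by
  set a : ℝ := ((m : ℝ) - 2) / 2 with hadef
  set b : ℝ := ((m : ℝ) + 2) / 2 with hbdef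
  have ha : 0 < a := by
    rw [hadef]
    have : (3:ℝ) ≤ (m:ℝ) := by exact_mod_cast hm
    linarith
  have hb : 0 < b := by rw [hbdef]; positivity
  set c₀ : ℝ := r ^ 2 / (4 * Real.pi) with hc₀def
  have hc₀ : 0 < c₀ := by rw [hc₀def]; positivity
  have hlogeq : ∀ s : ℝ, Real.log (r ^ 2 / (4 * Real.pi * s)) = Real.log (c₀ / s) := by
    intro s; rw [hc₀def, div_div]
  have hCK : 0 ≤ CKonst n m r := CKonst_nonneg n m r hr
  have key : ∀ z ∈ modHeatBall n m r,
      Kker n m r z ≤ CKonst n m r * (z.2 ^ a * Real.log (c₀ / z.2) ^ b) := by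
    intro z hz
    have := Kker_le_key n m r hr hz
    rw [hlogeq z.2] at this
    linarith [this] <;> skip
  refine ⟨?_, ⟨CKonst n m r, hCK, ?_⟩, ?_⟩
  · refine ⟨CKonst n m r * (c₀ ^ a / (a / b) ^ b), fun z hz => ?_⟩
    refine le_trans (key z hz) (mul_le_mul_of_nonneg_left ?_ hCK)
    exact saLb_le a b c₀ ha hb hc₀ hz.1 hz.2.1
  · intro z hz
    have := key z hz
    rw [hlogeq z.2]
    linarith [this]
  · apply squeeze_zero' (Filter.eventually_of_mem self_mem_nhdsWithin
      fun z hz => Kker_nonneg n m r hr hz)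
      (Filter.eventually_of_mem self_mem_nhdsWithin key)
    have hsnd : Filter.Tendsto (fun z : EuclideanSpace ℝ (Fin n) × ℝ => z.2)
        (nhdsWithin (0, 0) (modHeatBall n m r)) (nhdsWithin 0 (Set.Ioi 0)) := by
      rw [tendsto_nhdsWithin_iff]
      refine ⟨(continuous_snd.tendsto _).mono_left nhdsWithin_le_nhds, ?_⟩
      exact Filter.eventually_of_mem self_mem_nhdsWithin fun z hz => hz.1
    have hg := ((tendsto_saLb a b c₀ ha hb hc₀).comp hsnd).const_mul (CKonst n m r)
    simpa using hg
end
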